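/- For every τ ∈ ℝ, √2·sin(2τ) + 2·cos(2τ) ≤ √6, so that 3 − √2·sin(2τ) − 2·cos(2τ) ≥ 3 − √6 > 0; moreover, equality holds at τ* = arctan(√(5 − 2√6)), i.e., √2·sin(2τ*) + 2·cos(2τ*) = √6. Consequently, the asymptotic phase uncertainty factor √(3 − √2·sin(2τ) − 2·cos(2τ)) attains its minimum value √(3 − √6) ≈ 0.74 at τ = arctan(√(5 − 2√6)). -/
import Mathlib


open Real

lemma bound_aux (τ : ℝ) :
    Real.sqrt 2 * Real.sin (2 * τ) + 2 * Real.cos (2 * τ) ≤ Real.sqrt 6 := by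
  have hs := Real.sin_sq_add_cos_sq (2 * τ)
  have h2 : Real.sqrt 2 ^ 2 = 2 := Real.sq_sqrt (by norm_num)
  have h6 : Real.sqrt 6 ^ 2 = 6 := Real.sq_sqrt (by norm_num)
  nlinarith [Real.sqrt_nonneg 6, Real.sqrt_nonneg 2,
    sq_nonneg (Real.sqrt 2 * Real.cos (2 * τ) - 2 * Real.sin (2 * τ)),
    sq_nonneg (Real.sqrt 6 - (Real.sqrt 2 * Real.sin (2 * τ) + 2 * Real.cos (2 * τ))),
    sq_nonneg (Real.sqrt 6 + (Real.sqrt 2 * Real.sin (2 * τ) + 2 * Real.cos (2 * τ)))]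

lemma eq_aux :
    Real.sqrt 2 * Real.sin (2 * Real.arctan (Real.sqrt (5 - 2 * Real.sqrt 6))) +
      2 * Real.cos (2 * Real.arctan (Real.sqrt (5 - 2 * Real.sqrt 6))) = Real.sqrt 6 := by
  have h2 : Real.sqrt 2 ^ 2 = 2 := Real.sq_sqrt (by norm_num)
  have h3 : Real.sqrt 3 ^ 2 = 3 := Real.sq_sqrt (by norm_num)
  have h6 : Real.sqrt 6 ^ 2 = 6 := Real.sq_sqrt (by norm_num)
  have h23 : Real.sqrt 2 * Real.sqrt 3 = Real.sqrt 6 := by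
    rw [← Real.sqrt_mul (by norm_num)]; norm_num
  have ht : Real.sqrt (5 - 2 * Real.sqrt 6) = Real.sqrt 3 - Real.sqrt 2 := by
    have hle : Real.sqrt 2 ≤ Real.sqrt 3 := Real.sqrt_le_sqrt (by norm_num)
    rw [show (5 - 2 * Real.sqrt 6 : ℝ) = (Real.sqrt 3 - Real.sqrt 2) ^ 2 by nlinarith]
    exact Real.sqrt_sq (by linarith)
  set t : ℝ := Real.sqrt 3 - Real.sqrt 2 with htdef
  rw [ht]
  have hd : Real.sqrt (1 + t ^ 2) ^ 2 = 1 + t ^ 2 :=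
    Real.sq_sqrt (by positivity)
  have hdpos : (0:ℝ) < Real.sqrt (1 + t ^ 2) := Real.sqrt_pos.2 (by positivity)
  rw [Real.sin_two_mul, Real.cos_two_mul, Real.sin_arctan, Real.cos_arctan]
  have ht2 : t ^ 2 = 5 - 2 * Real.sqrt 6 := by
    rw [htdef]; linear_combination h3 + h2 - 2 * h23
  field_simp
  nlinarith [hdpos, hd, ht2, Real.sqrt_nonneg 6, Real.sqrt_nonneg 2, Real.sqrt_nonneg 3]

theorem optimal_squeezing_angle :
    (∀ τ : ℝ, Real.sqrt 2 * Real.sin (2 * τ) + 2 * Real.cos (2 * τ) ≤ Real.sqrt 6) ∧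
      (0 < 3 - Real.sqrt 6) ∧
      (Real.sqrt 2 * Real.sin (2 * Real.arctan (Real.sqrt (5 - 2 * Real.sqrt 6))) +
          2 * Real.cos (2 * Real.arctan (Real.sqrt (5 - 2 * Real.sqrt 6))) = Real.sqrt 6) ∧
      (∀ τ : ℝ,
        Real.sqrt (3 - Real.sqrt 6) ≤
          Real.sqrt (3 - Real.sqrt 2 * Real.sin (2 * τ) - 2 * Real.cos (2 * τ))) ∧
      Real.sqrt (3 - Real.sqrt 2 * Real.sin (2 * Real.arctan (Real.sqrt (5 - 2 * Real.sqrt 6))) -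
          2 * Real.cos (2 * Real.arctan (Real.sqrt (5 - 2 * Real.sqrt 6)))) =
        Real.sqrt (3 - Real.sqrt 6) := by
  have h6 : Real.sqrt 6 ^ 2 = 6 := Real.sq_sqrt (by norm_num)
  have hlt : (0:ℝ) < 3 - Real.sqrt 6 := by nlinarith [Real.sqrt_nonneg 6]
  refine ⟨bound_aux, hlt, eq_aux, fun τ => ?_, ?_⟩
  · exact Real.sqrt_le_sqrt (by linarith [bound_aux τ])
  · rw [show (3 : ℝ) - Real.sqrt 2 * Real.sin (2 * Real.arctan (Real.sqrt (5 - 2 * Real.sqrt 6))) -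
        2 * Real.cos (2 * Real.arctan (Real.sqrt (5 - 2 * Real.sqrt 6))) = 3 - Real.sqrt 6 by
      linarith [eq_aux]]
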